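/- arXiv:2008.01447 — 4 statements merged into one kernel-verified Lean document; each statement's English description precedes it below -/
import Mathlib

section
/- Leibniz rule for discrete forms: if f is a 0-form and α a 1-form on Σ, then on every quadrilateral ℓkji, d(f∧α)_{ℓkji} = (df∧α)_{ℓkji} + (f∧dα)_{ℓkji}, where (f∧α)_{ij} = (1/2)(f_i+f_j)α_{ij}, (df∧α) uses the product of 1-forms, (f∧ω)_{ℓkji} = (1/4)(f_i+f_j+f_k+f_ℓ)ω_{ℓkji} for a 2-form ω, and dα_{ℓkji} = α_{iℓ}+α_{ℓk}+α_{kj}+α_{ji}. -/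
/-- Discrete exterior derivative of a 0-form. -/
def d0 {ι : Type*} (f : ι → ℝ) (a b : ι) : ℝ := f a - f b

/-- Discrete exterior derivative of a 1-form, on the quadrilateral `ℓkji`. -/
def d1 {ι : Type*} (ω : ι → ι → ℝ) (ℓ k j i : ι) : ℝ :=
  ω i ℓ + ω ℓ k + ω k j + ω j i

/-- Product of a 0-form with a 1-form. -/
noncomputable def w01 {ι : Type*} (f : ι → ℝ) (α : ι → ι → ℝ) (a b : ι) : ℝ :=
  (1/2) * (f a + f b) * α a b

/-- Exterior product of two 1-forms on the quadrilateral `ℓkji`. -/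
noncomputable def wedge1 {ι : Type*} (α β : ι → ι → ℝ) (ℓ k j i : ι) : ℝ :=
  (1/4) * ((α j i + α k ℓ) * (β ℓ i + β k j) - (α ℓ i + α k j) * (β j i + β k ℓ))

/-- Leibniz rule: `d(f ∧ α) = df ∧ α + f ∧ dα` on every quadrilateral. -/
theorem stmt2 {ι : Type*} (f : ι → ℝ) (α : ι → ι → ℝ)
    (hα : ∀ a b, α a b = -α b a) (ℓ k j i : ι) :
    d1 (w01 f α) ℓ k j i =
      wedge1 (d0 f) α ℓ k j i
        + (1/4) * (f i + f j + f k + f ℓ) * d1 α ℓ k j i := by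
  simp only [d1, w01, wedge1, d0]
  rw [hα i ℓ, hα k ℓ]
  ring
end

section
/- Edge-labelling property of Moutard lifts: under the hypotheses that μ_i, μ_j, μ_k, μ_ℓ are null vectors with μ_k - μ_i = [(μ_i, μ_ℓ - μ_j)/(μ_ℓ, μ_j)](μ_ℓ - μ_j), (μ_ℓ, μ_j) ≠ 0, (μ_i,μ_j) ≠ 0, (μ_i,μ_ℓ) ≠ 0, one has (μ_i, μ_j) = (μ_k, μ_ℓ) and (μ_i, μ_ℓ) = (μ_j, μ_k). -/
/-- Edge-labelling property of Moutard lifts: under the conformal Moutard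
equation, opposite edges carry the same label `mₐᵦ = 1/(μₐ,μᵦ)`. -/
theorem stmt7 {V : Type*} [AddCommGroup V] [Module ℝ V]
    (B : V →ₗ[ℝ] V →ₗ[ℝ] ℝ) (hsymm : ∀ u v, B u v = B v u)
    (μi μj μk μℓ : V)
    (hi : B μi μi = 0) (hj : B μj μj = 0) (hk : B μk μk = 0) (hl : B μℓ μℓ = 0)
    (hlj : B μℓ μj ≠ 0) (hij : B μi μj ≠ 0) (hil : B μi μℓ ≠ 0)
    (hMoutard : μk - μi = (B μi (μℓ - μj) / B μℓ μj) • (μℓ - μj)) :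
    B μi μj = B μk μℓ ∧ B μi μℓ = B μj μk := by
  have hk' : μk = (B μi (μℓ - μj) / B μℓ μj) • (μℓ - μj) + μi :=
    eq_add_of_sub_eq hMoutard
  subst hk'
  have hjl : B μj μℓ = B μℓ μj := hsymm μj μℓ
  constructor <;>
  · simp only [map_sub, map_add, map_smul, LinearMap.add_apply, LinearMap.sub_apply,
      LinearMap.smul_apply, smul_eq_mul, hj, hl, hjl, hsymm μj μi, hsymm μℓ μi]
    try field_simp
    try ring
end

section
/- Conserved quantity criterion at degree 1 (necessity direction, pointwise form): let Γ(t) be the family of endomorphisms of ℝ^{p+1,q+1} acting as multiplication by (1 - t/m) on a null line s_j, by (1 - t/m)^{-1} on a null line s_i (with s_i, s_j spanned by null μ_i, μ_j, (μ_i,μ_j) = 1/m ≠ 0), and identically on (s_i ⊕ s_j)^⊥. If p(t) = c + tξ (c, ξ ∈ ℝ^{p+1,q+1}, viewed at vertices i and j as p(t)_i = c_i + tξ_i, p(t)_j = c_j + tξ_j) satisfies Γ(t)p(t)_i = p(t)_j for all t ∈ ℝ with t ≠ m, then c_j = c_i, the μ_j-component of ξ_i vanishes (equivalently ξ_i ⊥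 s_i), and ξ_j - ξ_i = Γ'(0)c_i, where Γ'(0) = -(1/m)(P_j - P_i) with P_i, P_j the projections onto s_i, s_j along the decomposition s_i ⊕ s_j ⊕ (s_i ⊕ s_j)^⊥. -/
/-- Necessity direction of the degree-1 conserved quantity criterion:
with null lines spanned by `μᵢ, μⱼ`, `(μᵢ,μⱼ) = 1/m`, projections
`Pᵢ v = (m(μⱼ,v))•μᵢ`, `Pⱼ v = (m(μᵢ,v))•μⱼ`, and
`Γ(t)v = v + ((1-t/m)-1)•Pⱼv + ((1-t/m)⁻¹-1)•Pᵢv`, if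
`Γ(t)(cᵢ + tξᵢ) = cⱼ + tξⱼ` for all `t ≠ m`, then `cⱼ = cᵢ`, the
`μⱼ`-component of `ξᵢ` vanishes (i.e. `(μᵢ,ξᵢ) = 0`), and
`ξⱼ - ξᵢ = Γ'(0)cᵢ = -(1/m)(Pⱼcᵢ - Pᵢcᵢ)`. -/
theorem stmt17 {V : Type*} [AddCommGroup V] [Module ℝ V]
    (B : V →ₗ[ℝ] V →ₗ[ℝ] ℝ) (hsymm : ∀ u v, B u v = B v u)
    (μi μj : V) (hμi0 : μi ≠ 0) (hμj0 : μj ≠ 0)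
    (hni : B μi μi = 0) (hnj : B μj μj = 0)
    (m : ℝ) (hm : m ≠ 0) (hpair : B μi μj = 1 / m)
    (ci cj ξi ξj : V)
    (hpar : ∀ t : ℝ, t ≠ m →
      (ci + t • ξi)
          + ((1 - t / m) - 1) • ((m * B μi (ci + t • ξi)) • μj)
          + ((1 - t / m)⁻¹ - 1) • ((m * B μj (ci + t • ξi)) • μi)
        = cj + t • ξj) :
    cj = ci ∧ B μi ξi = 0 ∧
      ξj - ξi = (-(1 / m)) • ((m * B μi ci) • μj - (m * B μj ci) • μi) := by
  -- linear independence of μi, μj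
  have hji : B μj μi = 1 / m := by rw [hsymm]; exact hpair
  have indep : ∀ x y : ℝ, x • μi + y • μj = 0 → x = 0 ∧ y = 0 := by
    intro x y hxy
    have h1 : B μi (x • μi + y • μj) = 0 := by rw [hxy]; simp
    have h2 : B μj (x • μi + y • μj) = 0 := by rw [hxy]; simp
    simp only [map_add, map_smul, smul_eq_mul, hni, hnj, hpair, hji, mul_zero,
      zero_add, add_zero] at h1 h2
    constructor
    · have : x * (1/m) ≠ 0 → False := fun h => h h2
      by_contra hx
      exact this (mul_ne_zero hx (one_div_ne_zero hm))
    · by_contra hy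
      exact (mul_ne_zero hy (one_div_ne_zero hm)) h1
  -- c_j = c_i
  have h0 := hpar 0 (fun h => hm h.symm)
  simp at h0
  have hcj : cj = ci := h0.symm
  -- key equation
  have key : ∀ t : ℝ, t ≠ 0 → t ≠ m →
      (ξj - ξi) + (B μi ci + t * B μi ξi) • μj
        = ((m * (B μj ci + t * B μj ξi)) / (m - t)) • μi := by
    intro t ht0 htm
    have hmt : m - t ≠ 0 := sub_ne_zero.mpr (fun h => htm h.symm)
    have h := hpar t htm
    rw [hcj] at h
    have e1 : ((1 - t / m) - 1) = -(t/m) := by ring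
    have e2 : ((1 - t / m)⁻¹ - 1) = t/(m-t) := by
      rw [show (1 - t/m) = (m-t)/m by field_simp, inv_div]
      field_simp
      ring
    rw [e1, e2] at h
    simp only [map_add, map_smul, smul_eq_mul, smul_smul] at h
    have s1 : -(t/m) * (m * (B μi ci + t * B μi ξi))
        = t * (-(B μi ci + t * B μi ξi)) := by
      linear_combination (-(B μi ci + t * B μi ξi)) * (div_mul_cancel₀ t hm)
    have s2 : t/(m-t) * (m * (B μj ci + t * B μj ξi))
        = t * ((m * (B μj ci + t * B μj ξi)) / (m - t)) := by
      rw [div_mul_eq_mul_div, mul_div_assoc]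
    rw [s1, s2] at h
    have h2 : t • ((ξj - ξi) + (B μi ci + t * B μi ξi) • μj)
        = t • (((m * (B μj ci + t * B μj ξi)) / (m - t)) • μi) := by
      rw [← smul_smul, ← smul_smul ] at h
      linear_combination (norm := module) (-1 : ℝ) • h
    exact smul_right_injective V ht0 h2
  set T : ℝ := |m| + 1 with hT
  have hT0 : T ≠ 0 := by positivity
  have hTpos : 0 < T := by positivity
  have hTm : T ≠ m := by
    intro h
    have h2 : |m| + 1 = m := hT ▸ h
    have := le_abs_self m
    linarith
  have hTm' : -T ≠ m := by
    intro h
    have h2 : -(|m| + 1) = m := hT ▸ h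
    have := neg_abs_le m
    linarith
  have hT0' : (-T : ℝ) ≠ 0 := by simpa using hT0
  have hmT : m - T ≠ 0 := sub_ne_zero.mpr (fun h => hTm h.symm)
  have hmT' : m - (-T) ≠ 0 := sub_ne_zero.mpr (fun h => hTm' h.symm)
  have k1 := key T hT0 hTm
  have k2 := key (-T) hT0' hTm'
  have hd : ((m * (B μj ci + T * B μj ξi)) / (m - T)
        - (m * (B μj ci + (-T) * B μj ξi)) / (m - (-T))) • μi
      + (-(2 * T * B μi ξi)) • μj = 0 := by
    linear_combination (norm := module) k2 - k1
  obtain ⟨hgi, hgj⟩ := indep _ _ hd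
  have hα : B μi ξi = 0 := by
    have h2 : 2 * T * B μi ξi = 0 := neg_eq_zero.mp hgj
    rcases mul_eq_zero.mp h2 with h | h
    · exact absurd h (by positivity)
    · exact h
  have h3 : m * (B μj ci + T * B μj ξi) * (m - (-T))
      = m * (B μj ci + (-T) * B μj ξi) * (m - T) :=
    (div_eq_div_iff hmT hmT').mp (sub_eq_zero.mp hgi)
  have hbβ : B μj ci + m * B μj ξi = 0 := by
    have h4 : m * (2 * T) * (B μj ci + m * B μj ξi) = 0 := by linear_combination h3
    rcases mul_eq_zero.mp h4 with h | h
    · rcases mul_eq_zero.mp h with h' | h'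
      · exact absurd h' hm
      · exact absurd h' (by positivity)
    · exact h
  have hgT : (m * (B μj ci + T * B μj ξi)) / (m - T) = B μj ci := by
    rw [div_eq_iff hmT]; linear_combination T * hbβ
  refine ⟨hcj, hα, ?_⟩
  rw [hα, hgT] at k1
  have hfin : ξj - ξi = (B μj ci) • μi - (B μi ci) • μj := by
    linear_combination (norm := module) k1
  rw [hfin]
  match_scalars <;> field_simp <;> ring
end

section
/- Circularity is cubic in the Combescure parameter: let x_i, x_j, x_k, x_ℓ ∈ ℝ^{p,q} with dx_{iℓ}, dx_{kℓ} linearly independent, dx_{ij} = α dx_{iℓ} + β dx_{kℓ}, dx_{jk} = γ dx_{iℓ} + δ dx_{kℓ}, and for t ∈ ℝ define x*_i = x_i, x*_j = x_j, and x*_k, x*_ℓ by dx*_{jk} = t·dx_{jk}, dx*_{iℓ} = (α + γt)dx_{iℓ}, dx*_{kℓ} = -(β + δt)dx_{kℓ} (closing the quadrilateral). Then p(t) := y*_i ∧ y*_j ∧ y*_k ∧ y*_ℓ ∈ Λ⁴ℝ^{p+1,q+1} (wedge of Euclidean lifts) is a polynomial in t of degree at most 3, and p vanishes at t = 0 and t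 = 1. -/
/-- Circularity is cubic in the Combescure parameter: for a circular
quadrilateral `x` with edge ratios `α, β, γ, δ` and the one-parameter family
`x*(t)` of edge-parallel quadrilaterals with `dx*_{jk} = t·dx_{jk}`,
`dx*_{iℓ} = (α+γt)·dx_{iℓ}`, the quantity
`p(t) = y*ᵢ ∧ y*ⱼ ∧ y*_k ∧ y*_ℓ ∈ Λ⁴ℝ^{p+1,q+1}` (wedge of Euclidean lifts)
is polynomial of degree at most 3 in `t` and vanishes at `t = 0` and
`t = 1`. -/
theorem stmt19 {V : Type*} [AddCommGroup V] [Module ℝ V]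
    (B : V →ₗ[ℝ] V →ₗ[ℝ] ℝ) (hsymm : ∀ u v, B u v = B v u)
    (o q xi xj xk xℓ : V)
    (ho : B o o = 0) (hq : B q q = 0) (hoq : B o q = -1)
    (horth : ∀ z ∈ ({xi, xj, xk, xℓ} : Set V), B z o = 0 ∧ B z q = 0)
    (α β γ δ : ℝ)
    (hindep : LinearIndependent ℝ ![xℓ - xi, xℓ - xk])
    (hij : xj - xi = α • (xℓ - xi) + β • (xℓ - xk))
    (hjk : xk - xj = γ • (xℓ - xi) + δ • (xℓ - xk))
    (hcirc : -- circularity of the original quadrilateral `x`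
      ExteriorAlgebra.ι ℝ (o + xi + ((1/2) * B xi xi) • q)
        * ExteriorAlgebra.ι ℝ (o + xj + ((1/2) * B xj xj) • q)
        * ExteriorAlgebra.ι ℝ (o + xk + ((1/2) * B xk xk) • q)
        * ExteriorAlgebra.ι ℝ (o + xℓ + ((1/2) * B xℓ xℓ) • q) = 0) :
    let xsk : ℝ → V := fun t => xj + t • (xk - xj)
    let xsℓ : ℝ → V := fun t => xi + (α + γ * t) • (xℓ - xi)
    let Y : V → ExteriorAlgebra ℝ V :=
      fun z => ExteriorAlgebra.ι ℝ (o + z + ((1/2) * B z z) • q)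
    let p : ℝ → ExteriorAlgebra ℝ V :=
      fun t => Y xi * Y xj * Y (xsk t) * Y (xsℓ t)
    (∃ c0 c1 c2 c3 : ExteriorAlgebra ℝ V,
        ∀ t : ℝ, p t = c0 + t • c1 + t ^ 2 • c2 + t ^ 3 • c3) ∧
      p 0 = 0 ∧ p 1 = 0 := by
  intro xsk xsℓ Y p
  -- notation
  set u : V := xℓ - xi with hu
  set v : V := xℓ - xk with hv
  set w : V := xk - xj with hw
  -- α + γ = 1
  have hsum : α + γ = 1 := by
    have h3 : xk - xi = (α + γ) • u + (β + δ) • v := by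
      have : xk - xi = (xj - xi) + (xk - xj) := by abel
      rw [this, hij, ← hw, hjk]
      module
    have hz : (1 - (α + γ)) • u + (-1 - (β + δ)) • v = 0 := by
      have h4 : (1 - (α + γ)) • u + (-1 - (β + δ)) • v
          = (xk - xi) - ((α + γ) • u + (β + δ) • v) := by
        rw [hu, hv]; module
      rw [h4, h3, sub_self]
    have := hindep.eq_zero_of_pair hz
    linarith [this.1]
  -- the coefficient vectors
  set A : V := o + xj + ((1/2) * B xj xj) • q with hA
  set Bk : V := w + ((1/2) * (B xj w + B w xj)) • q with hBk
  set Ck : V := ((1/2) * B w w) • q with hCk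
  set A' : V := o + xi + α • u
      + ((1/2) * B xi xi + (1/2) * α * (B xi u + B u xi) + (1/2) * α^2 * B u u) • q with hA'
  set B' : V := γ • u + ((1/2) * γ * (B xi u + B u xi) + α * γ * B u u) • q with hB'
  set C' : V := ((1/2) * γ^2 * B u u) • q with hC'
  have hk : ∀ t : ℝ, o + xsk t + ((1/2) * B (xsk t) (xsk t)) • q
      = A + t • Bk + t^2 • Ck := by
    intro t
    simp only [xsk, hA, hBk, hCk, ← hw, map_add, map_smul, LinearMap.add_apply,
      LinearMap.smul_apply, smul_eq_mul]
    module
  have hl : ∀ t : ℝ, o + xsℓ t + ((1/2) * B (xsℓ t) (xsℓ t)) • q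
      = A' + t • B' + t^2 • C' := by
    intro t
    simp only [xsℓ, hA', hB', hC', ← hu, map_add, map_smul, LinearMap.add_apply,
      LinearMap.smul_apply, smul_eq_mul]
    module
  have hYk : ∀ t : ℝ, Y (xsk t)
      = ExteriorAlgebra.ι ℝ A + t • ExteriorAlgebra.ι ℝ Bk
        + t^2 • ExteriorAlgebra.ι ℝ Ck := by
    intro t
    simp only [Y]
    rw [hk t, map_add, map_add, map_smul, map_smul]
  have hYl : ∀ t : ℝ, Y (xsℓ t)
      = ExteriorAlgebra.ι ℝ A' + t • ExteriorAlgebra.ι ℝ B'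
        + t^2 • ExteriorAlgebra.ι ℝ C' := by
    intro t
    simp only [Y]
    rw [hl t, map_add, map_add, map_smul, map_smul]
  have hE0 : Y xi * Y xj * ExteriorAlgebra.ι ℝ Ck * ExteriorAlgebra.ι ℝ C' = 0 := by
    simp only [hCk, hC', map_smul, smul_mul_assoc, mul_smul_comm, smul_smul, mul_assoc,
      ExteriorAlgebra.ι_sq_zero, mul_zero, smul_zero]
  refine ⟨⟨Y xi * Y xj * ExteriorAlgebra.ι ℝ A * ExteriorAlgebra.ι ℝ A',
      Y xi * Y xj * ExteriorAlgebra.ι ℝ A * ExteriorAlgebra.ι ℝ B'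
        + Y xi * Y xj * ExteriorAlgebra.ι ℝ Bk * ExteriorAlgebra.ι ℝ A',
      Y xi * Y xj * ExteriorAlgebra.ι ℝ A * ExteriorAlgebra.ι ℝ C'
        + Y xi * Y xj * ExteriorAlgebra.ι ℝ Bk * ExteriorAlgebra.ι ℝ B'
        + Y xi * Y xj * ExteriorAlgebra.ι ℝ Ck * ExteriorAlgebra.ι ℝ A',
      Y xi * Y xj * ExteriorAlgebra.ι ℝ Bk * ExteriorAlgebra.ι ℝ C'
        + Y xi * Y xj * ExteriorAlgebra.ι ℝ Ck * ExteriorAlgebra.ι ℝ B', ?_⟩, ?_, ?_⟩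
  · intro t
    simp only [p]
    rw [hYk t, hYl t]
    simp only [mul_add, add_mul, mul_smul_comm, smul_mul_assoc, smul_smul, smul_add,
      hE0, smul_zero]
    module
  · have e : xsk 0 = xj := by simp [xsk]
    have h2 : Y xj * Y xj = 0 := ExteriorAlgebra.ι_sq_zero _
    simp only [p]
    rw [e, mul_assoc (Y xi) (Y xj) (Y xj), h2, mul_zero, zero_mul]
  · have e1 : xsk 1 = xk := by simp [xsk, hw]
    have e2 : xsℓ 1 = xℓ := by
      simp only [xsℓ, mul_one, hsum, one_smul, hu]
      abel
    simp only [p]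
    rw [e1, e2]
    exact hcirc
end
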